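/- Let Ω = ℕ × Bool carry the discrete probability measure P with P({(n, b)}) = (1/2)·2ⁿ/3^{n+1} for every n ∈ ℕ and b ∈ Bool. Define Y(n, false) = 2ⁿ, Y(n, true) = 2^{n+1} (content of the allocated envelope) and B(n, false) = 2ⁿ, B(n, true) = −2ⁿ (benefit of switching). Then for every k ∈ ℕ, the conditional expectation of B given the event {Y = 2^{k+1}}, namely (∑_{ω : Y(ω) = 2^{k+1}} B(ω)·P({ω})) / P({ω : Y(ω) = 2^{k+1}}), equals 2^{k+1}/10, which is strictly positive; hence it is beneficial to switch for every observed amount of this form. -/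
import Mathlib


open Classical

/-- Broome's discrete distribution: `P {(n, b)} = (1/2) · 2ⁿ / 3^(n+1)`. -/
noncomputable def broomeP : ℕ × Bool → ℝ := fun ω => (1 / 2) * 2 ^ ω.1 / 3 ^ (ω.1 + 1)

/-- The content of the allocated envelope. -/
noncomputable def broomeY : ℕ × Bool → ℝ := fun ω =>
  if ω.2 then 2 ^ (ω.1 + 1) else 2 ^ ω.1

/-- The benefit of switching. -/
noncomputable def broomeB : ℕ × Bool → ℝ := fun ω =>
  if ω.2 then -(2 ^ ω.1) else 2 ^ ω.1

lemma broomeY_eq_iff (k : ℕ) (ω : ℕ × Bool) :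
    broomeY ω = 2 ^ (k + 1) ↔ ω = (k + 1, false) ∨ ω = (k, true) := by
  have h2 : Function.Injective fun n : ℕ => (2 : ℝ) ^ n :=
    (pow_right_strictMono₀ one_lt_two).injective
  obtain ⟨n, b⟩ := ω
  cases b <;> simp only [broomeY, Bool.false_eq_true, if_false, if_true, Prod.mk.injEq] <;>
    constructor
  · intro h; exact Or.inl ⟨h2 h, trivial⟩
  · rintro (⟨h, -⟩ | ⟨-, h⟩) <;> simp_all
  · intro h; exact Or.inr ⟨Nat.succ_injective (h2 h), trivial⟩
  · rintro (⟨-, h⟩ | ⟨h, -⟩) <;> simp_all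

lemma broome_tsum (k : ℕ) (f : ℕ × Bool → ℝ) :
    (∑' ω : ℕ × Bool, if broomeY ω = 2 ^ (k + 1) then f ω else 0) =
      f (k + 1, false) + f (k, true) := by
  have hne : ((k + 1, false) : ℕ × Bool) ≠ (k, true) := by simp
  rw [tsum_eq_sum (s := {((k + 1, false) : ℕ × Bool), (k, true)})
      (fun ω hω => by
        rw [if_neg]
        intro h
        rcases (broomeY_eq_iff k ω).mp h with h' | h' <;> simp [h'] at hω)]
  rw [Finset.sum_insert (by simp), Finset.sum_singleton]
  rw [if_pos ((broomeY_eq_iff k _).mpr (Or.inl rfl)),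
    if_pos ((broomeY_eq_iff k _).mpr (Or.inr rfl))]

/-- In Broome's discrete doubling-only game, the conditional expectation of the
benefit of switching given that the observed amount is `2^(k+1)` equals
`2^(k+1)/10 > 0`. -/
theorem broome_discrete_switch (k : ℕ) :
    (∑' ω : ℕ × Bool, if broomeY ω = 2 ^ (k + 1) then broomeB ω * broomeP ω else 0) /
        (∑' ω : ℕ × Bool, if broomeY ω = 2 ^ (k + 1) then broomeP ω else 0) =
      2 ^ (k + 1) / 10 ∧
    0 < (2 : ℝ) ^ (k + 1) / 10 := by
  constructor
  · rw [broome_tsum, broome_tsum]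
    simp only [broomeP, broomeB, broomeY, if_true, if_false, Bool.false_eq_true]
    have h2 : (0 : ℝ) < 2 ^ k := by positivity
    have h3 : (0 : ℝ) < 3 ^ (k + 1) := by positivity
    field_simp
    ring
  · positivity
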